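/- arXiv:0805.2752 — 2 statements merged into one kernel-verified Lean document; each statement's English description precedes it below -/
import Mathlib

section
/- Let 1 < ε < 2 and b > 0, and let a : ℕ → E be an ℓ-margitron run of length T. Then T ≤ R²/γ_d² + ((2/(2−ε))·b/γ_d^(1+ε))^(1/ε). Moreover, if the run has converged after t_c ≥ 1 updates, i.e. ⟨a_{t_c}, y_k⟩ > b·‖a_{t_c}‖^(1−ε) for every k, then the achieved directional margin γ'_d := min_k ⟨a_{t_c}/‖a_{t_c}‖, y_k⟩ satisfies γ'_d/γ_d ≥ ( (R²/(b·γ_d^(1−ε)))·T_b^(ε−1) + 2/(2−ε) )^(−1), where T_b = R²/γ_d² + ((2/(2−ε))·b/γ_d^(1+ε))^(1/ε). -/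
/-!
Each update moves `a` by at least `γ_d` along `u`, so `‖a_t‖ ≥ ⟪u, a_t⟫ ≥ t γ_d`. A misclassified
update raises `‖a_t‖²` by at most `R² + 2b ‖a_t‖^(1-ε) ≤ R² + 2b (t γ_d)^(1-ε)`, and by concavity of
`x ↦ x^(2-ε)` these increments sum to `‖a_t‖² ≤ t R² + (2b γ_d^(1-ε)/(2-ε)) t^(2-ε)`. Squeezing
`‖a_T‖` between the two bounds bounds `T`; after convergence every margin is at least
`b ‖a_T‖^(-ε)`, and the same two bounds control `‖a_T‖^ε` from above.
-/

open scoped RealInnerProductSpace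

theorem rpow_le_rpow_add_mul_rpow_sub_one_mul_sub {x y p : ℝ} (hx : 0 ≤ x) (hy : 0 < y)
    (hp0 : 0 ≤ p) (hp1 : p ≤ 1) : x ^ p ≤ y ^ p + p * y ^ (p - 1) * (x - y) := by
  have hs : -1 ≤ (x - y) / y := by rw [le_div_iff₀ hy]; linarith
  have h := rpow_one_add_le_one_add_mul_self hs hp0 hp1
  rw [show 1 + (x - y) / y = x / y by field_simp; ring, Real.div_rpow hx hy.le,
    div_le_iff₀ (by positivity)] at h
  rw [Real.rpow_sub_one hy.ne']
  calc x ^ p ≤ (1 + p * ((x - y) / y)) * y ^ p := h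
    _ = y ^ p + p * (y ^ p / y) * (x - y) := by field_simp

theorem le_succ_mul_add_div_mul_rpow {s : ℕ → ℝ} {N : ℕ} {A c p : ℝ} (hc : 0 ≤ c)
    (hp0 : 0 < p) (hp1 : p ≤ 1) (h0 : s 0 ≤ A)
    (hs : ∀ t, t + 1 < N → s (t + 1) ≤ s t + A + c * ((t : ℝ) + 1) ^ (p - 1)) :
    ∀ t < N, s t ≤ (t + 1) * A + c / p * (t : ℝ) ^ p := by
  intro t ht
  induction t with
  | zero => simpa [Real.zero_rpow hp0.ne'] using h0
  | succ t ih =>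
    have tangent := rpow_le_rpow_add_mul_rpow_sub_one_mul_sub (Nat.cast_nonneg t)
      (by positivity : (0 : ℝ) < t + 1) hp0.le hp1
    -- concavity of `x ↦ x ^ p` makes the increments telescope
    have hc' : c * ((t : ℝ) + 1) ^ (p - 1) ≤ c / p * (((t : ℝ) + 1) ^ p - (t : ℝ) ^ p) := by
      rw [div_mul_eq_mul_div, le_div_iff₀ hp0]
      nlinarith [mul_le_mul_of_nonneg_left tangent hc]
    push_cast
    linarith [hs t ht, ih (by omega)]

theorem le_add_rpow_one_div_of_le_add_mul_rpow {x A C ε : ℝ} (hA : 0 ≤ A) (hC : 0 < C)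
    (hε : 1 ≤ ε) (h : x ≤ A + C * x ^ (1 - ε)) : x ≤ A + C ^ (1 / ε) := by
  rcases le_or_gt x (C ^ (1 / ε)) with hxC | hxC
  · linarith
  calc x ≤ A + C * x ^ (1 - ε) := h
    _ ≤ A + C * (C ^ (1 / ε)) ^ (1 - ε) := by
      have := Real.rpow_le_rpow_of_nonpos (by positivity) hxC.le (by linarith : 1 - ε ≤ 0)
      gcongr
    _ = A + C ^ (1 + 1 / ε * (1 - ε)) := by
      rw [Real.rpow_add hC, Real.rpow_one, Real.rpow_mul hC.le]
    _ = A + C ^ (1 / ε) := by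
      congr 2
      field_simp
      ring

theorem rpow_le_mul_rpow_sub_two_of_sq_le {x m B ε : ℝ} (hm : 0 < m) (hmx : m ≤ x)
    (hε : ε ≤ 2) (hB : x ^ 2 ≤ B) : x ^ ε ≤ B * m ^ (ε - 2) := by
  have hx : 0 < x := hm.trans_le hmx
  calc x ^ ε = x ^ 2 * x ^ (ε - 2) := by
        rw [← Real.rpow_two, ← Real.rpow_add hx]; ring_nf
    _ ≤ B * m ^ (ε - 2) :=
      mul_le_mul hB (Real.rpow_le_rpow_of_nonpos hm hmx (by linarith)) (by positivity)
        ((sq_nonneg x).trans hB)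

theorem mul_rpow_neg_norm_le_inner_inv_norm_smul {E : Type*} [NormedAddCommGroup E]
    [InnerProductSpace ℝ E] {x v : E} {b ε : ℝ} (hx : x ≠ 0)
    (h : b * ‖x‖ ^ (1 - ε) ≤ ⟪x, v⟫) : b * ‖x‖ ^ (-ε) ≤ ⟪‖x‖⁻¹ • x, v⟫ := by
  have hx' : 0 < ‖x‖ := norm_pos_iff.mpr hx
  rw [real_inner_smul_left]
  calc b * ‖x‖ ^ (-ε) = ‖x‖⁻¹ * (b * ‖x‖ ^ (1 - ε)) := by
        rw [Real.rpow_sub hx', Real.rpow_neg hx'.le, Real.rpow_one]; field_simp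
    _ ≤ ‖x‖⁻¹ * ⟪x, v⟫ := by gcongr

section

variable {E ι : Type*} [NormedAddCommGroup E] [InnerProductSpace ℝ E]

def IsMargitronRun (y : ι → E) (b ε : ℝ) (T : ℕ) (a : ℕ → E) : Prop :=
  a 0 = 0 ∧ ∀ t < T, ∃ k, a (t + 1) = a t + y k ∧
    ⟪a t, y k⟫ ≤ if t = 0 then 0 else b * ‖a t‖ ^ (1 - ε)

namespace IsMargitronRun

variable {y : ι → E} {b ε : ℝ} {T : ℕ} {a : ℕ → E} {u : E} {γ R : ℝ}

theorem natCast_mul_le_inner (h : IsMargitronRun y b ε T a) (hmargin : ∀ k, γ ≤ ⟪u, y k⟫)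
    (t : ℕ) (ht : t ≤ T) : t * γ ≤ ⟪u, a t⟫ := by
  induction t with
  | zero => simp [h.1]
  | succ t ih =>
    obtain ⟨k, hk, -⟩ := h.2 t ht
    rw [hk, inner_add_right]
    push_cast
    linarith [ih (by omega), hmargin k]

theorem natCast_mul_le_norm (h : IsMargitronRun y b ε T a) (hu : ‖u‖ ≤ 1)
    (hmargin : ∀ k, γ ≤ ⟪u, y k⟫) (t : ℕ) (ht : t ≤ T) : t * γ ≤ ‖a t‖ :=
  calc t * γ ≤ ⟪u, a t⟫ := h.natCast_mul_le_inner hmargin t ht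
    _ ≤ ‖u‖ * ‖a t‖ := real_inner_le_norm _ _
    _ ≤ ‖a t‖ := mul_le_of_le_one_left (norm_nonneg _) hu

theorem norm_sq_one_le (h : IsMargitronRun y b ε T a) (hT : 0 < T) (hR : ∀ k, ‖y k‖ ≤ R) :
    ‖a 1‖ ^ 2 ≤ R ^ 2 := by
  obtain ⟨k, hk, -⟩ := h.2 0 hT
  rw [hk, h.1, zero_add]
  exact pow_le_pow_left₀ (norm_nonneg _) (hR k) 2

theorem norm_sq_succ_succ_le (h : IsMargitronRun y b ε T a) {t : ℕ} (ht : t + 1 < T)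
    (hR : ∀ k, ‖y k‖ ≤ R) (hb : 0 ≤ b) (hε : 1 ≤ ε) {m : ℝ} (hm : 0 < m)
    (hma : m ≤ ‖a (t + 1)‖) :
    ‖a (t + 2)‖ ^ 2 ≤ ‖a (t + 1)‖ ^ 2 + R ^ 2 + 2 * b * m ^ (1 - ε) := by
  obtain ⟨k, hk, hmis⟩ := h.2 (t + 1) ht
  rw [if_neg t.succ_ne_zero] at hmis
  have hy : ‖y k‖ ^ 2 ≤ R ^ 2 := pow_le_pow_left₀ (norm_nonneg _) (hR k) 2
  have hpow : ‖a (t + 1)‖ ^ (1 - ε) ≤ m ^ (1 - ε) :=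
    Real.rpow_le_rpow_of_nonpos hm hma (by linarith)
  rw [hk, norm_add_sq_real]
  nlinarith [mul_le_mul_of_nonneg_left hpow hb]

theorem norm_sq_le (h : IsMargitronRun y b ε T a) (hu : ‖u‖ ≤ 1) (hγ : 0 < γ)
    (hmargin : ∀ k, γ ≤ ⟪u, y k⟫) (hR : ∀ k, ‖y k‖ ≤ R) (hb : 0 ≤ b) (hε : 1 ≤ ε)
    (hε2 : ε < 2) (t : ℕ) (ht : t ≤ T) :
    ‖a t‖ ^ 2 ≤ t * R ^ 2 + 2 * b * γ ^ (1 - ε) / (2 - ε) * (t : ℝ) ^ (2 - ε) := by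
  rcases t with _ | t
  · simp [h.1, Real.zero_rpow (by linarith : 2 - ε ≠ 0)]
  have hsucc : ∀ s < T, ‖a (s + 1)‖ ^ 2 ≤
      (s + 1) * R ^ 2 + 2 * b * γ ^ (1 - ε) / (2 - ε) * (s : ℝ) ^ (2 - ε) := by
    refine le_succ_mul_add_div_mul_rpow (s := fun s => ‖a (s + 1)‖ ^ 2) (by positivity)
      (by linarith) (by linarith) (h.norm_sq_one_le (by omega) hR) fun s hs => ?_
    have hlow : ((s : ℝ) + 1) * γ ≤ ‖a (s + 1)‖ := by
      exact_mod_cast h.natCast_mul_le_norm hu hmargin (s + 1) hs.le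
    have := h.norm_sq_succ_succ_le hs hR hb hε (by positivity) hlow
    rw [Real.mul_rpow (by positivity) hγ.le] at this
    rw [show 2 - ε - 1 = 1 - ε by ring]
    linarith
  calc ‖a (t + 1)‖ ^ 2
      ≤ (t + 1) * R ^ 2 + 2 * b * γ ^ (1 - ε) / (2 - ε) * (t : ℝ) ^ (2 - ε) := hsucc t ht
    _ ≤ (t + 1) * R ^ 2 + 2 * b * γ ^ (1 - ε) / (2 - ε) * ((t : ℝ) + 1) ^ (2 - ε) := by
      have : 0 < 2 - ε := by linarith
      gcongr
      linarith
    _ = _ := by push_cast; ring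

theorem length_le (h : IsMargitronRun y b ε T a) (hu : ‖u‖ ≤ 1) (hγ : 0 < γ)
    (hmargin : ∀ k, γ ≤ ⟪u, y k⟫) (hR : ∀ k, ‖y k‖ ≤ R) (hb : 0 < b) (hε : 1 ≤ ε)
    (hε2 : ε < 2) :
    (T : ℝ) ≤ R ^ 2 / γ ^ 2 + (2 / (2 - ε) * b / γ ^ (1 + ε)) ^ (1 / ε) := by
  have h2ε : 0 < 2 - ε := by linarith
  rcases Nat.eq_zero_or_pos T with rfl | hT
  · simp only [Nat.cast_zero]
    positivity
  have hT' : (0 : ℝ) < T := by exact_mod_cast hT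
  refine le_add_rpow_one_div_of_le_add_mul_rpow (by positivity) (by positivity) hε ?_
  have hsq : ((T : ℝ) * γ) ^ 2 ≤ T * R ^ 2 + 2 * b * γ ^ (1 - ε) / (2 - ε) * (T : ℝ) ^ (2 - ε) :=
    (pow_le_pow_left₀ (by positivity) (h.natCast_mul_le_norm hu hmargin T le_rfl) 2).trans
      (h.norm_sq_le hu hγ hmargin hR hb.le hε hε2 T le_rfl)
  have hK : 2 * b * γ ^ (1 - ε) / (2 - ε) * (T : ℝ) ^ (2 - ε) =
      T * γ ^ 2 * (2 / (2 - ε) * b / γ ^ (1 + ε) * (T : ℝ) ^ (1 - ε)) := by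
    simp only [Real.rpow_sub hγ, Real.rpow_sub hT', Real.rpow_add hγ, Real.rpow_one,
      Real.rpow_two]
    field_simp
  have hR2 : (T : ℝ) * γ ^ 2 * (R ^ 2 / γ ^ 2) = T * R ^ 2 := by field_simp
  refine le_of_mul_le_mul_left ?_ (by positivity : (0 : ℝ) < T * γ ^ 2)
  rw [mul_add, hR2]
  linear_combination hsq + hK

theorem rpow_norm_mul_le (h : IsMargitronRun y b ε T a) (hu : ‖u‖ ≤ 1) (hγ : 0 < γ)
    (hmargin : ∀ k, γ ≤ ⟪u, y k⟫) (hR : ∀ k, ‖y k‖ ≤ R) (hb : 0 < b) (hε : 1 ≤ ε)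
    (hε2 : ε < 2) (hT : 0 < T) :
    ‖a T‖ ^ ε * γ ≤ b * (R ^ 2 / (b * γ ^ (1 - ε)) * (T : ℝ) ^ (ε - 1) + 2 / (2 - ε)) := by
  have hT' : (0 : ℝ) < T := by exact_mod_cast hT
  have hnorm := rpow_le_mul_rpow_sub_two_of_sq_le (by positivity)
    (h.natCast_mul_le_norm hu hmargin T le_rfl) hε2.le
    (h.norm_sq_le hu hγ hmargin hR hb.le hε hε2 T le_rfl)
  calc ‖a T‖ ^ ε * γ
      ≤ (T * R ^ 2 + 2 * b * γ ^ (1 - ε) / (2 - ε) * (T : ℝ) ^ (2 - ε)) *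
          ((T : ℝ) * γ) ^ (ε - 2) * γ := by gcongr
    _ = _ := by
      rw [Real.mul_rpow hT'.le hγ.le]
      simp only [Real.rpow_sub hγ, Real.rpow_sub hT', Real.rpow_one, Real.rpow_two]
      field_simp

end IsMargitronRun

end

/-- an ℓ-margitron run with 1 < ε < 2 has length
T ≤ T_b := R²/γ_d² + ((2/(2−ε))·b/γ_d^(1+ε))^(1/ε); if moreover it has converged after
T ≥ 1 updates then γ'_d/γ_d ≥ ((R²/(b·γ_d^(1−ε)))·T_b^(ε−1) + 2/(2−ε))⁻¹. -/
theorem stmt17 {E : Type*} [NormedAddCommGroup E] [InnerProductSpace ℝ E]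
    {n : ℕ} (hn : 0 < n) (y : Fin n → E)
    (R : ℝ) (hR : IsGreatest (Set.range (fun k : Fin n => ‖y k‖)) R)
    (u : E) (hu : ‖u‖ = 1) (γd : ℝ) (hγd : 0 < γd)
    (hmargin : ∀ k : Fin n, γd ≤ ⟪u, y k⟫)
    (ε b : ℝ) (hε : 1 < ε) (hε2 : ε < 2) (hb : 0 < b)
    (T : ℕ) (a : ℕ → E) (ha0 : a 0 = 0)
    (hrun : ∀ t : ℕ, t < T → ∃ k : Fin n, a (t + 1) = a t + y k ∧
      ⟪a t, y k⟫ ≤ if t = 0 then 0 else b * ‖a t‖ ^ (1 - ε))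
    (Tb : ℝ)
    (hTb : Tb = R ^ 2 / γd ^ 2 + ((2 / (2 - ε)) * b / γd ^ (1 + ε)) ^ (1 / ε)) :
    (T : ℝ) ≤ Tb ∧
    (1 ≤ T → (∀ k : Fin n, b * ‖a T‖ ^ (1 - ε) < ⟪a T, y k⟫) →
      (Finset.univ.inf' (Finset.univ_nonempty_iff.mpr ⟨⟨0, hn⟩⟩)
          (fun k : Fin n => ⟪(‖a T‖)⁻¹ • a T, y k⟫)) / γd ≥
        ((R ^ 2 / (b * γd ^ (1 - ε))) * Tb ^ (ε - 1) + 2 / (2 - ε))⁻¹) := by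
  have h : IsMargitronRun y b ε T a := ⟨ha0, hrun⟩
  have hyR : ∀ k, ‖y k‖ ≤ R := fun k => hR.2 ⟨k, rfl⟩
  have hlen : (T : ℝ) ≤ Tb := hTb ▸ h.length_le hu.le hγd hmargin hyR hb hε.le hε2
  refine ⟨hlen, fun hT hconv => ?_⟩
  have hnorm : 0 < ‖a T‖ := lt_of_lt_of_le (by positivity)
    (h.natCast_mul_le_norm hu.le hmargin T le_rfl)
  have hinf : b * ‖a T‖ ^ (-ε) ≤ Finset.univ.inf' (Finset.univ_nonempty_iff.mpr ⟨⟨0, hn⟩⟩)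
      (fun k : Fin n => ⟪(‖a T‖)⁻¹ • a T, y k⟫) :=
    Finset.le_inf' _ _ fun k _ =>
      mul_rpow_neg_norm_le_inner_inv_norm_smul (norm_pos_iff.mp hnorm) (hconv k).le
  have hD : ‖a T‖ ^ ε * γd ≤ b * (R ^ 2 / (b * γd ^ (1 - ε)) * Tb ^ (ε - 1) + 2 / (2 - ε)) :=
    (h.rpow_norm_mul_le hu.le hγd hmargin hyR hb hε.le hε2 hT).trans (by gcongr)
  set D := R ^ 2 / (b * γd ^ (1 - ε)) * Tb ^ (ε - 1) + 2 / (2 - ε)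
  have hDpos : 0 < D := by
    have : 0 < 2 - ε := by linarith
    have : 0 < Tb := (Nat.cast_pos.mpr hT).trans_le hlen
    positivity
  rw [ge_iff_le, inv_le_iff_one_le_mul₀ hDpos, div_mul_eq_mul_div, le_div_iff₀ hγd, one_mul]
  calc γd = ‖a T‖ ^ (-ε) * (‖a T‖ ^ ε * γd) := by
        rw [← mul_assoc, ← Real.rpow_add hnorm, neg_add_cancel, Real.rpow_zero, one_mul]
    _ ≤ ‖a T‖ ^ (-ε) * (b * D) := by gcongr
    _ = b * ‖a T‖ ^ (-ε) * D := by ring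
    _ ≤ _ := by gcongr
end

section
/- Let 1/2 ≤ ε ≤ 1, δ > 0, and suppose the parameter b is chosen as b/R² = (1 − ε/2)^(1−ε)·δ^(−ε)·(γ_d²/R²)^(1−ε). If a : ℕ → E is a t-margitron run of length t_c ≥ 1 that has converged after t_c updates, i.e. ⟨a_{t_c}, y_k⟩ > b·t_c^(1−ε) for every k ∈ {1, …, n}, then the achieved directional margin γ'_d := min_k ⟨a_{t_c}/‖a_{t_c}‖, y_k⟩ satisfies γ'_d/γ_d ≥ (δ + 2/(2−ε))^(−1). -/
open scoped RealInnerProductSpace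
open Finset

/-!
Along a run, `⟪u, a t⟫` grows by at least `γ_d` per update, so `‖a T‖ ≥ γ_d T`, while a
misclassified update raises `‖a t‖²` by at most `R² + 2 b t^(1-ε)`; summing,
`‖a T‖² ≤ T (R² + c β)` with `β = b T^(1-ε)` and `c = 2/(2-ε)`. At convergence
`γ'_d ≥ β / ‖a T‖`, so it suffices that `γ_d ‖a T‖ ≤ (δ + c) β`. If `R² ≤ δ β` this follows from
the two growth bounds directly. Otherwise both `‖a T‖² / T` and `γ_d² T` are at most
`Y = R² (δ + c) / δ`, and since `ε ≥ 1/2` this gives `γ_d ‖a T‖ ≤ (γ_d² T)^(1-ε) Y^ε`; the choice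
of `b` makes the right-hand side at most `(δ + c) β`.
-/

theorem rpow_add_mul_rpow_sub_one_le_add_one_rpow {x p : ℝ} (hx : 0 ≤ x) (hp : 1 ≤ p) :
    x ^ p + p * x ^ (p - 1) ≤ (x + 1) ^ p := by
  have h := (convexOn_rpow hp).le_slope_of_hasDerivAt (Set.mem_Ici.2 hx)
    (Set.mem_Ici.2 (by linarith : 0 ≤ x + 1)) (lt_add_one x)
    (Real.hasDerivAt_rpow_const (Or.inr hp))
  rw [slope_def_field, add_sub_cancel_left, div_one] at h
  linarith

theorem sum_range_rpow_le {q : ℝ} (hq : 0 ≤ q) (t : ℕ) :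
    ∑ s ∈ range t, (s : ℝ) ^ q ≤ (t : ℝ) ^ (q + 1) / (q + 1) := by
  induction t with
  | zero => simp [Real.zero_rpow (by linarith : q + 1 ≠ 0)]
  | succ t ih =>
    have h := rpow_add_mul_rpow_sub_one_le_add_one_rpow (Nat.cast_nonneg t)
      (by linarith : 1 ≤ q + 1)
    rw [add_sub_cancel_right] at h
    rw [sum_range_succ, Nat.cast_succ, le_div_iff₀ (by linarith)]
    rw [le_div_iff₀ (by linarith)] at ih
    nlinarith

section Steps

variable {E ι : Type*} [NormedAddCommGroup E] [InnerProductSpace ℝ E] {y : ι → E} {a : ℕ → E}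
  {T : ℕ}

theorem mul_le_inner_of_steps {u : E} {γ : ℝ} (hγ : ∀ k, γ ≤ ⟪u, y k⟫) (ha0 : a 0 = 0)
    (hstep : ∀ t < T, ∃ k, a (t + 1) = a t + y k) : ∀ t ≤ T, γ * t ≤ ⟪u, a t⟫ := by
  intro t
  induction t with
  | zero => simp [ha0]
  | succ t ih =>
    intro ht
    obtain ⟨k, hk⟩ := hstep t ht
    rw [hk, inner_add_right, Nat.cast_succ, mul_add_one]
    linarith [ih (by omega), hγ k]

theorem norm_sq_le_of_steps {R : ℝ} {θ : ℕ → ℝ} (hy : ∀ k, ‖y k‖ ≤ R) (ha0 : a 0 = 0)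
    (hstep : ∀ t < T, ∃ k, a (t + 1) = a t + y k ∧ ⟪a t, y k⟫ ≤ θ t) :
    ∀ t ≤ T, ‖a t‖ ^ 2 ≤ R ^ 2 * t + 2 * ∑ s ∈ range t, θ s := by
  intro t
  induction t with
  | zero => simp [ha0]
  | succ t ih =>
    intro ht
    obtain ⟨k, hk, hθ⟩ := hstep t ht
    have hyk : ‖y k‖ ^ 2 ≤ R ^ 2 := pow_le_pow_left₀ (norm_nonneg _) (hy k) 2
    rw [hk, norm_add_sq_real, sum_range_succ, Nat.cast_succ]
    linarith [ih (by omega)]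

theorem norm_sq_le_of_rpow_steps {R b q : ℝ} (hy : ∀ k, ‖y k‖ ≤ R) (ha0 : a 0 = 0)
    (hb : 0 ≤ b) (hq : 0 ≤ q)
    (hstep : ∀ t < T, ∃ k, a (t + 1) = a t + y k ∧ ⟪a t, y k⟫ ≤ b * (t : ℝ) ^ q) :
    ‖a T‖ ^ 2 ≤ T * (R ^ 2 + 2 / (q + 1) * (b * (T : ℝ) ^ q)) := by
  have hsum := sum_range_rpow_le hq T
  rw [Real.rpow_add_one' (Nat.cast_nonneg T) (by linarith)] at hsum
  calc ‖a T‖ ^ 2 ≤ R ^ 2 * T + 2 * (b * ∑ s ∈ range T, (s : ℝ) ^ q) := by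
        simpa only [mul_sum] using norm_sq_le_of_steps hy ha0 hstep T le_rfl
    _ ≤ R ^ 2 * T + 2 * (b * ((T : ℝ) ^ q * T / (q + 1))) := by gcongr
    _ = T * (R ^ 2 + 2 / (q + 1) * (b * (T : ℝ) ^ q)) := by ring

theorem div_le_inner_inv_norm_smul {x z : E} {γ D β : ℝ} (hD : 0 < D) (hx : 0 < ‖x‖)
    (h : γ * ‖x‖ ≤ D * β) (hβ : β ≤ ⟪x, z⟫) : γ / D ≤ ⟪‖x‖⁻¹ • x, z⟫ := by
  rw [real_inner_smul_left, inv_mul_eq_div, div_le_div_iff₀ hD hx]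
  nlinarith

end Steps

theorem mul_le_rpow_mul_rpow_sq {X Y ε : ℝ} (hX : 0 < X) (hXY : X ≤ Y) (hε : 1 / 2 ≤ ε) :
    X * Y ≤ (X ^ (1 - ε) * Y ^ ε) ^ 2 := by
  have hY : 0 < Y := hX.trans_le hXY
  calc X * Y = X ^ (2 - 2 * ε) * X ^ (2 * ε - 1) * Y := by
        rw [← Real.rpow_add hX]; norm_num
    _ ≤ X ^ (2 - 2 * ε) * Y ^ (2 * ε - 1) * Y := by
        gcongr
        linarith
    _ = (X ^ (1 - ε) * Y ^ ε) ^ 2 := by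
        rw [mul_pow, ← Real.rpow_natCast, ← Real.rpow_natCast, ← Real.rpow_mul hX.le,
          ← Real.rpow_mul hY.le, mul_assoc, ← Real.rpow_add_one hY.ne']
        ring_nf

theorem rpow_mul_rpow_le_threshold {ρ g δ T D c ε : ℝ} (hρ : 0 < ρ) (hg : 0 < g) (hδ : 0 < δ)
    (hT : 0 < T) (hD : 0 < D) (hc : 0 < c) (hε1 : ε ≤ 1) (hcD : 1 ≤ c * D) :
    (g * T) ^ (1 - ε) * (ρ * D / δ) ^ ε ≤
      D * (ρ * (c ^ (1 - ε) * δ ^ (-ε) * (g / ρ) ^ (1 - ε)) * T ^ (1 - ε)) := by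
  have hsplit : ∀ {x : ℝ}, 0 < x → x ^ ε * x ^ (1 - ε) = x := fun hx => by
    rw [← Real.rpow_add hx, add_sub_cancel, Real.rpow_one]
  calc (g * T) ^ (1 - ε) * (ρ * D / δ) ^ ε
      ≤ (g * T) ^ (1 - ε) * (ρ * D / δ) ^ ε * (c * D) ^ (1 - ε) :=
        le_mul_of_one_le_right (by positivity) (Real.one_le_rpow hcD (by linarith))
    _ = D * (ρ * (c ^ (1 - ε) * δ ^ (-ε) * (g / ρ) ^ (1 - ε)) * T ^ (1 - ε)) := by
        rw [Real.mul_rpow hg.le hT.le, Real.div_rpow (by positivity) hδ.le,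
          Real.mul_rpow hρ.le hD.le, Real.mul_rpow hc.le hD.le, Real.rpow_neg hδ.le,
          Real.div_rpow hg.le hρ.le]
        have hρp : 0 < ρ ^ (1 - ε) := by positivity
        have hδp : 0 < δ ^ ε := by positivity
        field_simp
        linear_combination D ^ ε * D ^ (1 - ε) * hsplit hρ + ρ * hsplit hD

theorem margin_mul_norm_le {γ R δ ε b T N : ℝ} (hγ : 0 < γ) (hR : 0 < R) (hδ : 0 < δ)
    (hε : 1 / 2 ≤ ε) (hε1 : ε ≤ 1) (hT : 0 < T)
    (hb : b = R ^ 2 * ((1 - ε / 2) ^ (1 - ε) * δ ^ (-ε) * (γ ^ 2 / R ^ 2) ^ (1 - ε)))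
    (hN : γ * T ≤ N) (hN2 : N ^ 2 ≤ T * (R ^ 2 + 2 / (2 - ε) * (b * T ^ (1 - ε)))) :
    γ * N ≤ (δ + 2 / (2 - ε)) * (b * T ^ (1 - ε)) := by
  set β := b * T ^ (1 - ε)
  set D := δ + 2 / (2 - ε)
  set Z := R ^ 2 + 2 / (2 - ε) * β
  have h2ε : 0 < 2 - ε := by linarith
  have hN0 : 0 < N := by nlinarith
  have hNZ : γ * N ≤ Z := le_of_mul_le_mul_left (by nlinarith) hT
  rcases le_or_gt (R ^ 2) (δ * β) with hA | hB
  · linarith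
  set Y := R ^ 2 * D / δ
  have hZY : Z ≤ Y := by
    rw [le_div_iff₀ hδ]
    have : 2 / (2 - ε) * (β * δ) ≤ 2 / (2 - ε) * R ^ 2 := by gcongr; linarith
    linarith
  have hTZY : T * Z ≤ T * Y := mul_le_mul_of_nonneg_left hZY hT.le
  have hXY : γ ^ 2 * T ≤ Y :=
    le_of_mul_le_mul_left (by nlinarith [pow_le_pow_left₀ (by positivity) hN 2]) hT
  have hsq : (γ * N) ^ 2 ≤ ((γ ^ 2 * T) ^ (1 - ε) * Y ^ ε) ^ 2 :=
    calc (γ * N) ^ 2 = γ ^ 2 * N ^ 2 := mul_pow _ _ _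
      _ ≤ γ ^ 2 * (T * Y) := by gcongr; linarith
      _ = γ ^ 2 * T * Y := (mul_assoc _ _ _).symm
      _ ≤ ((γ ^ 2 * T) ^ (1 - ε) * Y ^ ε) ^ 2 :=
        mul_le_rpow_mul_rpow_sq (by positivity) hXY hε
  have hDc : 1 ≤ (1 - ε / 2) * D := by
    have : (1 - ε / 2) * (2 / (2 - ε)) = 1 := by field_simp
    nlinarith
  calc γ * N ≤ (γ ^ 2 * T) ^ (1 - ε) * Y ^ ε :=
        (pow_le_pow_iff_left₀ (by positivity) (by positivity) two_ne_zero).1 hsq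
    _ ≤ D * β := by
        rw [show β = b * T ^ (1 - ε) from rfl, hb]
        exact rpow_mul_rpow_le_threshold (by positivity) (by positivity) hδ hT (by positivity)
          (by linarith) hε1 hDc

/-- with 1/2 ≤ ε ≤ 1, δ > 0 and
b/R² = (1−ε/2)^(1−ε)·δ^(−ε)·(γ_d²/R²)^(1−ε), a converged t-margitron run achieves
γ'_d/γ_d ≥ (δ + 2/(2−ε))⁻¹. -/
theorem stmt18 {E : Type*} [NormedAddCommGroup E] [InnerProductSpace ℝ E]
    {n : ℕ} (hn : 0 < n) (y : Fin n → E)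
    (R : ℝ) (hR : IsGreatest (Set.range (fun k : Fin n => ‖y k‖)) R)
    (u : E) (hu : ‖u‖ = 1) (γd : ℝ) (hγd : 0 < γd)
    (hmargin : ∀ k : Fin n, γd ≤ ⟪u, y k⟫)
    (ε b δ : ℝ) (hε : 1 / 2 ≤ ε) (hε1 : ε ≤ 1) (hb : 0 < b) (hδ : 0 < δ)
    (hbeq : b / R ^ 2 =
      (1 - ε / 2) ^ (1 - ε) * δ ^ (-ε) * (γd ^ 2 / R ^ 2) ^ (1 - ε))
    (tc : ℕ) (htc : 1 ≤ tc) (a : ℕ → E) (ha0 : a 0 = 0)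
    (hrun : ∀ t : ℕ, t < tc → ∃ k : Fin n, a (t + 1) = a t + y k ∧
      ⟪a t, y k⟫ ≤ if t = 0 then 0 else b * (t : ℝ) ^ (1 - ε))
    (hconv : ∀ k : Fin n, b * (tc : ℝ) ^ (1 - ε) < ⟪a tc, y k⟫) :
    (Finset.univ.inf' (Finset.univ_nonempty_iff.mpr ⟨⟨0, hn⟩⟩)
        (fun k : Fin n => ⟪(‖a tc‖)⁻¹ • a tc, y k⟫)) / γd ≥
      (δ + 2 / (2 - ε))⁻¹ := by
  have hyR : ∀ k, ‖y k‖ ≤ R := fun k => hR.2 ⟨k, rfl⟩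
  have hR0 : 0 < R := by
    have h := real_inner_le_norm u (y ⟨0, hn⟩)
    rw [hu, one_mul] at h
    linarith [hmargin ⟨0, hn⟩, hyR ⟨0, hn⟩]
  have hstep : ∀ t < tc, ∃ k, a (t + 1) = a t + y k ∧ ⟪a t, y k⟫ ≤ b * (t : ℝ) ^ (1 - ε) := by
    intro t ht
    obtain ⟨k, hk, hθ⟩ := hrun t ht
    refine ⟨k, hk, hθ.trans ?_⟩
    split_ifs
    exacts [by positivity, le_rfl]
  have hT : (0 : ℝ) < tc := by exact_mod_cast htc
  have hN : γd * tc ≤ ‖a tc‖ := by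
    simpa [hu] using (mul_le_inner_of_steps hmargin ha0
      (fun t ht => (hstep t ht).imp fun _ => And.left) tc le_rfl).trans (real_inner_le_norm u _)
  have hN2 := norm_sq_le_of_rpow_steps hyR ha0 hb.le (by linarith) hstep
  rw [show 1 - ε + 1 = 2 - ε by ring] at hN2
  have key := margin_mul_norm_le hγd hR0 hδ hε hε1 hT (by rw [← hbeq]; field_simp) hN hN2
  have hN0 : 0 < ‖a tc‖ := (by positivity : 0 < γd * tc).trans_le hN
  have hD : 0 < δ + 2 / (2 - ε) := by
    have : 0 < 2 - ε := by linarith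
    positivity
  rw [ge_iff_le, le_div_iff₀ hγd, inv_mul_eq_div]
  exact le_inf' _ _ fun k _ => div_le_inner_inv_norm_smul hD hN0 key (hconv k).le
end
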